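/- Let m = nq + r where q ≥ 1 and 0 < r < n, and assume n > 2r + rq. Let l be the smallest nonnegative integer that satisfies at least one of the inequalities (1) q·l² + 2lr − rn ≥ 0 and (2) q·l² + l(2r + q) + r − rn ≥ 0. If this l satisfies both (1) and (2), then L(m,n) = qn + 2l; that is, every A ∈ D(m,n) satisfies tdet A ≥ qn + 2l, and there exists A ∈ D(m,n) with tdet A = qn + 2l. -/

import Mathlib

/-- D(m,n): n×n matrices with nonnegative integer entries, all row and column sums equal m. -/
def IsDSM (m n : ℕ) (A : Fin n → Fin n → ℕ) : Prop :=
  (∀ i, ∑ j, A i j = m) ∧ (∀ j, ∑ i, A i j = m)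

/-- tdet A: maximum of a transversal sum over all permutations. -/
def tdet {n : ℕ} (A : Fin n → Fin n → ℕ) : ℕ :=
  Finset.univ.sup fun σ : Equiv.Perm (Fin n) => ∑ i, A i (σ i)

/-!
By Egerváry's duality, `tdet A` is the least weight `∑ u + ∑ v` of an integer cover
`A i j ≤ u i + v j`. A cover of `A ∈ D(nq + r, n)` lighter than `qn + 2l` can be normalized
to row weights `≥ q` and column weights `≥ 0`; if `s` rows and `t` columns carry excess weight,
then `s + t ≤ 2l - 1`, and the columns without excess force `rn ≤ qst + r(s + t)`, which is at
most `q(l-1)² + (l-1)(2r+q) + r`, contradicting the minimality of `l`.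

Conversely, write `n = l + k`. Put `q` everywhere outside the first `l` rows and columns, add
to each of the last `k` columns (and rows) a band of `r` ones winding cyclically through the
first `l` positions, and fill the `l × l` corner with balanced line sums. This matrix lies in
`D(m, n)` and its entries are at most `q + [i < l] + [j < l]`, a cover of weight `qn + 2l`.
-/

open Finset

section duality
variable {n : ℕ}

theorem sum_apply_le_tdet (A : Fin n → Fin n → ℕ) (σ : Equiv.Perm (Fin n)) :
    ∑ i, A i (σ i) ≤ tdet A :=
  le_sup (f := fun σ : Equiv.Perm (Fin n) => ∑ i, A i (σ i)) (mem_univ σ)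

theorem tdet_le_of_le_add {A : Fin n → Fin n → ℕ} {u v : Fin n → ℕ}
    (h : ∀ i j, A i j ≤ u i + v j) : tdet A ≤ ∑ i, u i + ∑ j, v j :=
  Finset.sup_le fun σ _ => calc
    ∑ i, A i (σ i) ≤ ∑ i, (u i + v (σ i)) := sum_le_sum fun i _ => h i (σ i)
    _ = ∑ i, u i + ∑ j, v j := by rw [sum_add_distrib, Equiv.sum_comp σ v]

def IsCover (A : Fin n → Fin n → ℕ) (u v : Fin n → ℤ) : Prop :=
  ∀ i j, (A i j : ℤ) ≤ u i + v j

theorem sum_add_sum_le_tdet_of_hall {u v : Fin n → ℤ}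
    (hall : ∀ s : Finset (Fin n),
      #s ≤ #(s.biUnion fun i => {j | (A i j : ℤ) = u i + v j})) :
    ∑ i, u i + ∑ j, v j ≤ tdet A := by
  obtain ⟨f, hf, htight⟩ := (all_card_le_biUnion_card_iff_exists_injective _).mp hall
  let σ : Equiv.Perm (Fin n) := Equiv.ofBijective f (Finite.injective_iff_bijective.mp hf)
  have hσ : ∀ i, (A i (σ i) : ℤ) = u i + v (σ i) := fun i =>
    (by simpa using htight i : (A i (f i) : ℤ) = u i + v (f i))
  calc ∑ i, u i + ∑ j, v j = ∑ i, (A i (σ i) : ℤ) := by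
        rw [sum_congr rfl fun i _ => hσ i, sum_add_distrib, Equiv.sum_comp σ v]
    _ ≤ tdet A := by exact_mod_cast sum_apply_le_tdet A σ

/-- If Hall's condition fails for the tight entries of a cover on a set `W` of rows, lowering the
weights on `W` and raising them on the tight columns of `W` gives a cheaper cover. -/
theorem IsCover.exists_lt {u v : Fin n → ℤ} (hc : IsCover A u v)
    {W : Finset (Fin n)} (hW : #(W.biUnion fun i => {j | (A i j : ℤ) = u i + v j}) < #W) :
    ∃ u' v', IsCover A u' v' ∧ ∑ i, u' i + ∑ j, v' j < ∑ i, u i + ∑ j, v j := by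
  set N := W.biUnion fun i => {j | (A i j : ℤ) = u i + v j}
  refine ⟨fun i => u i - if i ∈ W then 1 else 0, fun j => v j + if j ∈ N then 1 else 0,
    fun i j => ?_, ?_⟩
  · have hij := hc i j
    by_cases hi : i ∈ W
    · by_cases hj : j ∈ N
      · simp only [hi, hj, if_true]
        linarith
      · have hne : (A i j : ℤ) ≠ u i + v j := fun h =>
          hj (mem_biUnion.mpr ⟨i, hi, by simp [h]⟩)
        simp only [hi, hj, if_true, if_false]
        omega
    · simp only [hi, if_false]
      split_ifs <;> linarith
  · simp only [sum_sub_distrib, sum_add_distrib, sum_boole, filter_mem_eq_inter, univ_inter]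
    have : (#N : ℤ) < #W := by exact_mod_cast hW
    linarith

theorem exists_isCover_sum_le_tdet (A : Fin n → Fin n → ℕ) :
    ∃ u v, IsCover A u v ∧ ∑ i, u i + ∑ j, v j ≤ tdet A := by
  suffices descent : ∀ d : ℕ, ∀ u v, IsCover A u v →
      ∑ i, u i + ∑ j, v j ≤ tdet A + d →
      ∃ u v, IsCover A u v ∧ ∑ i, u i + ∑ j, v j ≤ tdet A by
    let u : Fin n → ℤ := fun i => (univ.sup (A i) : ℕ)
    have hc : IsCover A u 0 := fun i j => by simpa [u] using le_sup (f := A i) (mem_univ j)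
    set S := ∑ i, u i + ∑ j, (0 : Fin n → ℤ) j
    exact descent (S - tdet A).toNat u 0 hc
      (by linarith [Int.self_le_toNat (S - tdet A)])
  intro d
  induction d with
  | zero => exact fun u v hc h => ⟨u, v, hc, by simpa using h⟩
  | succ d ih =>
    intro u v hc h
    by_cases hall : ∀ s : Finset (Fin n),
        #s ≤ #(s.biUnion fun i => {j | (A i j : ℤ) = u i + v j})
    · exact ⟨u, v, hc, sum_add_sum_le_tdet_of_hall hall⟩
    · push Not at hall
      obtain ⟨W, hW⟩ := hall
      obtain ⟨u', v', hc', hlt⟩ := hc.exists_lt hW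
      exact ih u' v' hc' (by push_cast at h; linarith)

theorem exists_isCover_sum_le_tdet_nonneg (hn : 0 < n) (A : Fin n → Fin n → ℕ) :
    ∃ u v, IsCover A u v ∧ ∑ i, u i + ∑ j, v j ≤ tdet A ∧
      (∀ j, 0 ≤ v j) ∧ ∃ j₀, v j₀ = 0 := by
  obtain ⟨u, v, hc, hsum⟩ := exists_isCover_sum_le_tdet A
  obtain ⟨j₀, -, hj₀⟩ := exists_min_image univ v ⟨⟨0, hn⟩, mem_univ _⟩
  refine ⟨fun i => u i + v j₀, fun j => v j - v j₀, fun i j => ?_, ?_,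
    fun j => sub_nonneg.mpr (hj₀ j (mem_univ j)), j₀, sub_self _⟩
  · linarith [hc i j]
  · simp only [sum_add_distrib, sum_sub_distrib]
    linarith

end duality

section lowerBound
variable {n q r : ℕ} {A : Fin n → Fin n → ℕ}

/-- With `S` the rows of weight above `q` and `T` the columns of positive weight, every column
outside `T` carries at least `q * #S + r` inside `S`; summing over those columns and comparing
with the row sums of `S` gives the inequality. -/
theorem IsCover.mul_card_le (hA : IsDSM (n * q + r) n A) {u v : Fin n → ℤ}
    (hc : IsCover A u v) :
    r * n ≤ q * #{i | (q : ℤ) < u i} * #{j | 0 < v j} +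
      r * (#{i | (q : ℤ) < u i} + #{j | 0 < v j}) := by
  classical
  set S : Finset (Fin n) := {i | (q : ℤ) < u i}
  set T : Finset (Fin n) := {j | 0 < v j}
  have hsmall : ∀ i ∉ S, ∀ j ∉ T, A i j ≤ q := fun i hi j hj => by
    simp only [S, T, mem_filter, mem_univ, true_and, not_lt] at hi hj
    have := hc i j
    omega
  have hcol : ∀ j ∈ Tᶜ, q * #S + r ≤ ∑ i ∈ S, A i j := fun j hj => by
    have hout : ∑ i ∈ Sᶜ, A i j ≤ #Sᶜ * q := by
      simpa using sum_le_card_nsmul Sᶜ _ q fun i hi =>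
        hsmall i (mem_compl.1 hi) j (mem_compl.1 hj)
    have hcard : #Sᶜ + #S = n := by simp [card_compl_add_card]
    have hsplit := sum_add_sum_compl S fun i => A i j
    rw [hA.2 j] at hsplit
    nlinarith
  have hrows : #Tᶜ * (q * #S + r) ≤ #S * (n * q + r) := calc
    #Tᶜ * (q * #S + r) ≤ ∑ j ∈ Tᶜ, ∑ i ∈ S, A i j := by
      simpa using card_nsmul_le_sum _ _ _ hcol
    _ = ∑ i ∈ S, ∑ j ∈ Tᶜ, A i j := sum_comm
    _ ≤ ∑ i ∈ S, ∑ j, A i j := sum_le_sum fun i _ => sum_le_sum_of_subset (subset_univ _)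
    _ = #S * (n * q + r) := by simp [hA.1]
  have hcard : #Tᶜ + #T = n := by simp [card_compl_add_card]
  have h1 : r * n = r * #Tᶜ + r * #T := by rw [← mul_add, hcard]
  have h2 : #S * (n * q) = #S * (#Tᶜ * q) + #S * (#T * q) := by
    rw [← mul_add, ← add_mul, hcard]
  nlinarith

theorem card_add_card_le_of_le {u v : Fin n → ℤ} (hu : ∀ i, (q : ℤ) ≤ u i)
    (hv : ∀ j, 0 ≤ v j) :
    (#{i | (q : ℤ) < u i} + #{j | 0 < v j} : ℤ) ≤ ∑ i, u i + ∑ j, v j - n * q := by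
  have hS : (#{i | (q : ℤ) < u i} : ℤ) ≤ ∑ i, (u i - q) := by
    rw [← sum_boole]
    exact sum_le_sum fun i _ => by split_ifs <;> linarith [hu i]
  have hT : (#{j | 0 < v j} : ℤ) ≤ ∑ j, v j := by
    rw [← sum_boole]
    exact sum_le_sum fun j _ => by split_ifs <;> linarith [hv j]
  simp only [sum_sub_distrib, sum_const, card_univ, Fintype.card_fin, nsmul_eq_mul] at hS
  linarith

theorem IsCover.le_row (hA : IsDSM (n * q + r) n A) {u v : Fin n → ℤ} (hc : IsCover A u v)
    (i : Fin n) : (n * q + r : ℤ) ≤ n * u i + ∑ j, v j := calc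
  (n * q + r : ℤ) = ∑ j, (A i j : ℤ) := by exact_mod_cast (hA.1 i).symm
  _ ≤ ∑ j, (u i + v j) := sum_le_sum fun j _ => hc i j
  _ = n * u i + ∑ j, v j := by simp [sum_add_distrib]

theorem IsCover.le_col (hA : IsDSM (n * q + r) n A) {u v : Fin n → ℤ} (hc : IsCover A u v)
    {j : Fin n} (hj : v j = 0) : (n * q + r : ℤ) ≤ ∑ i, u i := calc
  (n * q + r : ℤ) = ∑ i, (A i j : ℤ) := by exact_mod_cast (hA.2 j).symm
  _ ≤ ∑ i, u i := sum_le_sum fun i _ => by simpa [hj] using hc i j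

theorem mul_le_of_add_le {s t l : ℕ} (h : s + t ≤ 2 * l + 1) : s * t ≤ l * (l + 1) := by
  have hZ : (s : ℤ) * t ≤ l * (l + 1) := by
    have : ((s : ℤ) + t) ≤ 2 * l + 1 := by exact_mod_cast h
    nlinarith [sq_nonneg ((s : ℤ) - t), sq_nonneg ((s : ℤ) + t)]
  exact_mod_cast hZ

theorem add_two_mul_le_tdet (hA : IsDSM (n * q + r) n A) {l : ℕ} (hn : 2 * l + 1 ≤ n)
    (hl : q * l ^ 2 + l * (2 * r + q) + r < r * n) : q * n + 2 * (l + 1) ≤ tdet A := by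
  have hr : 0 < r := Nat.pos_of_ne_zero fun hr => by simp [hr] at hl
  by_contra! hlt
  obtain ⟨u, v, hc, hsum, hv, j₀, hj₀⟩ := exists_isCover_sum_le_tdet_nonneg (by omega) A
  have hlt' : (tdet A : ℤ) + 1 ≤ q * n + 2 * l + 2 := by exact_mod_cast hlt
  have hcol := hc.le_col hA hj₀
  have hu : ∀ i, (q : ℤ) ≤ u i := fun i => by
    have hrow := hc.le_row hA i
    by_contra! hi
    have : (n : ℤ) * u i ≤ n * (q - 1) := by gcongr; omega
    have : (2 * l + 1 : ℤ) ≤ n := by exact_mod_cast hn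
    nlinarith
  have hst := card_add_card_le_of_le hu hv
  have hst' : #{i | (q : ℤ) < u i} + #{j | 0 < v j} ≤ 2 * l + 1 := by
    have : (#{i | (q : ℤ) < u i} + #{j | 0 < v j} : ℤ) ≤ 2 * l + 1 := by nlinarith
    exact_mod_cast this
  have hkey := hc.mul_card_le hA
  have hprod := mul_le_of_add_le hst'
  have : q * #{i | (q : ℤ) < u i} * #{j | 0 < v j} ≤ q * (l * (l + 1)) := by
    rw [mul_assoc]; exact Nat.mul_le_mul_left q hprod
  nlinarith

end lowerBound

theorem sum_range_add_div {l : ℕ} (hl : 0 < l) (x : ℕ) :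
    ∑ c ∈ range l, (x + c) / l = x := by
  induction x with
  | zero => exact sum_eq_zero fun c hc => by simpa using Nat.div_eq_of_lt (mem_range.1 hc)
  | succ x ih =>
    have hshift := sum_range_succ' (fun c => (x + c) / l) l
    rw [sum_range_succ, ih, Nat.add_div_right x hl] at hshift
    simp only [add_zero, ← add_assoc] at hshift
    simp only [add_right_comm x 1]
    omega

/-- `band l w i j` counts the multiples of `l` in `(j * w + i, (j + 1) * w + i]`. These
intervals tile `ℕ`, so row sums telescope, and column sums follow from `sum_range_add_div`. -/
def band (l w i j : ℕ) : ℕ := ((j + 1) * w + i) / l - (j * w + i) / l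

theorem sum_range_band_row {l : ℕ} (w : ℕ) {i : ℕ} (hi : i < l) (k : ℕ) :
    ∑ j ∈ range k, band l w i j = (k * w + i) / l := by
  have hmono : Monotone fun j => (j * w + i) / l := fun a b hab =>
    Nat.div_le_div_right (by gcongr)
  simp only [band]
  rw [sum_range_tsub hmono k]
  simp [Nat.div_eq_of_lt hi]

theorem sum_range_band_col {l : ℕ} (hl : 0 < l) (w j : ℕ) :
    ∑ i ∈ range l, band l w i j = w := by
  simp only [band]
  rw [sum_tsub_distrib _ fun i _ => Nat.div_le_div_right (by gcongr; omega),
    sum_range_add_div hl, sum_range_add_div hl]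
  simp [add_mul]

theorem band_le {l w b : ℕ} (hl : 0 < l) (h : w ≤ l * b) (i j : ℕ) : band l w i j ≤ b := by
  have : ((j + 1) * w + i) / l ≤ (j * w + i) / l + b := by
    rw [← Nat.add_mul_div_left _ _ hl]
    exact Nat.div_le_div_right (by rw [add_mul]; omega)
  rw [band]; omega

def blockFill (l q : ℕ) (X E : ℕ → ℕ → ℕ) (i j : ℕ) : ℕ :=
  if i < l then (if j < l then X i j else q + E i (j - l))
  else if j < l then q + E j (i - l) else q

theorem blockFill_swap (l q : ℕ) (X E : ℕ → ℕ → ℕ) (i j : ℕ) :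
    blockFill l q X E j i = blockFill l q (fun i j => X j i) E i j := by
  unfold blockFill
  split_ifs <;> rfl

theorem sum_range_blockFill {l q r k : ℕ} {X E : ℕ → ℕ → ℕ}
    (hX : ∀ i < l, ∑ j ∈ range l, X i j + ∑ j ∈ range k, E i j = l * q + r)
    (hE : ∀ j < k, ∑ i ∈ range l, E i j = r) {i : ℕ} (hi : i < l + k) :
    ∑ j ∈ range (l + k), blockFill l q X E i j = (l + k) * q + r := by
  rw [sum_range_add]
  by_cases hil : i < l
  · have hleft : ∑ j ∈ range l, blockFill l q X E i j = ∑ j ∈ range l, X i j :=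
      sum_congr rfl fun j hj => by simp [blockFill, hil, mem_range.1 hj]
    have hright : ∑ j ∈ range k, blockFill l q X E i (l + j) = ∑ j ∈ range k, (q + E i j) :=
      sum_congr rfl fun j _ => by simp [blockFill, hil]
    rw [hleft, hright, sum_add_distrib, sum_const, card_range, smul_eq_mul]
    linarith [hX i hil]
  · have hleft : ∑ j ∈ range l, blockFill l q X E i j = ∑ j ∈ range l, (q + E j (i - l)) :=
      sum_congr rfl fun j hj => by simp [blockFill, hil, mem_range.1 hj]
    have hright : ∑ j ∈ range k, blockFill l q X E i (l + j) = ∑ j ∈ range k, q :=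
      sum_congr rfl fun j _ => by simp [blockFill, hil]
    rw [hleft, hright, sum_add_distrib, hE (i - l) (by omega)]
    simp only [sum_const, card_range, smul_eq_mul]
    ring

theorem blockFill_le {l q : ℕ} {X E : ℕ → ℕ → ℕ} (hX : ∀ i j, X i j ≤ q + 2)
    (hE : ∀ i j, E i j ≤ 1) (i j : ℕ) :
    blockFill l q X E i j ≤ q + (if i < l then 1 else 0) + (if j < l then 1 else 0) := by
  unfold blockFill
  split_ifs
  all_goals first | omega | linarith [hX i j, hE i (j - l), hE j (i - l)]

/-- The `l × l` corner: a band with constant line sums, topped up on the diagonal so that each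
row `i` and column `i` complements the `i`-th line of the `l × k` band of width `r`. -/
def cornerBlock (q r l k i j : ℕ) : ℕ :=
  band l (l * q + r - (k * r + (l - 1)) / l) i j +
    if i = j then (k * r + (l - 1)) / l - (k * r + i) / l else 0

theorem add_pred_div_le {K l M : ℕ} (hl : 0 < l) (h : K ≤ l * M) : (K + (l - 1)) / l ≤ M := by
  rw [Nat.div_le_iff_le_mul_add_pred hl]; linarith

section cornerBlock
variable {q r l k : ℕ}

theorem sum_range_cornerBlock_row (hl : 0 < l) (h : k * r ≤ l * (l * q + r)) {i : ℕ}
    (hi : i < l) :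
    ∑ j ∈ range l, cornerBlock q r l k i j + (k * r + i) / l = l * q + r := by
  have hceil := add_pred_div_le hl h
  simp only [cornerBlock, sum_add_distrib, sum_range_band_row _ hi, sum_ite_eq, mem_range, hi,
    if_true, Nat.mul_add_div hl, Nat.div_eq_of_lt hi]
  have : (k * r + i) / l ≤ (k * r + (l - 1)) / l := Nat.div_le_div_right (by omega)
  omega

theorem sum_range_cornerBlock_col (hl : 0 < l) (h : k * r ≤ l * (l * q + r)) {j : ℕ}
    (hj : j < l) :
    ∑ i ∈ range l, cornerBlock q r l k i j + (k * r + j) / l = l * q + r := by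
  have hceil := add_pred_div_le hl h
  simp only [cornerBlock, sum_add_distrib, sum_range_band_col hl, sum_ite_eq', mem_range, hj,
    if_true]
  have : (k * r + j) / l ≤ (k * r + (l - 1)) / l := Nat.div_le_div_right (by omega)
  omega

theorem cornerBlock_le (hl : 0 < l) (hrl : r ≤ l) (i j : ℕ) :
    cornerBlock q r l k i j ≤ q + 2 := by
  have hband : band l (l * q + r - (k * r + (l - 1)) / l) i j ≤ q + 1 :=
    band_le hl ((Nat.sub_le _ _).trans (by rw [mul_add, mul_one]; omega)) i j
  have hdiag : (k * r + (l - 1)) / l ≤ (k * r + i) / l + 1 := by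
    rw [← Nat.add_div_right _ hl]; exact Nat.div_le_div_right (by omega)
  unfold cornerBlock
  split_ifs <;> omega

end cornerBlock

def extremalMatrix (q r l k : ℕ) : ℕ → ℕ → ℕ :=
  blockFill l q (cornerBlock q r l k) (band l r)

theorem exists_isDSM_tdet_le {q r l k : ℕ} (hl : 0 < l) (hrl : r ≤ l)
    (h : k * r ≤ l * (l * q + r)) :
    ∃ A : Fin (l + k) → Fin (l + k) → ℕ,
      IsDSM ((l + k) * q + r) (l + k) A ∧ tdet A ≤ q * (l + k) + 2 * l := by
  have hE : ∀ j < k, ∑ i ∈ range l, band l r i j = r := fun j _ => sum_range_band_col hl r j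
  refine ⟨fun i j => extremalMatrix q r l k i j, ⟨fun i => ?_, fun j => ?_⟩, ?_⟩
  · rw [Fin.sum_univ_eq_sum_range (extremalMatrix q r l k i)]
    refine sum_range_blockFill (fun i hi => ?_) hE i.isLt
    rw [sum_range_band_row r hi, sum_range_cornerBlock_row hl h hi]
  · show ∑ i : Fin (l + k), blockFill l q (cornerBlock q r l k) (band l r) i j = _
    simp only [blockFill_swap l q (cornerBlock q r l k)]
    rw [Fin.sum_univ_eq_sum_range (blockFill l q _ (band l r) j)]
    refine sum_range_blockFill (fun j hj => ?_) hE j.isLt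
    rw [sum_range_band_row r hj, sum_range_cornerBlock_col hl h hj]
  · have hcap := blockFill_le (l := l) (cornerBlock_le (k := k) (q := q) hl hrl)
      (band_le (w := r) (b := 1) hl (by rwa [mul_one]))
    have hcount : ∑ i : Fin (l + k), (if (i : ℕ) < l then 1 else 0) = l := by
      rw [Fin.sum_univ_eq_sum_range (fun i => if i < l then 1 else 0), sum_range_add,
        sum_congr rfl fun i hi => if_pos (mem_range.1 hi)]
      simp
    calc tdet (fun i j : Fin (l + k) => extremalMatrix q r l k i j)
        ≤ ∑ i : Fin (l + k), (q + if (i : ℕ) < l then 1 else 0) +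
          ∑ j : Fin (l + k), (if (j : ℕ) < l then 1 else 0) :=
          tdet_le_of_le_add fun i j => hcap i j
      _ = q * (l + k) + 2 * l := by
        rw [sum_add_distrib, hcount]
        simp only [sum_const, card_univ, Fintype.card_fin, smul_eq_mul]
        ring

theorem lt_of_mul_le_sq_add {n q r l : ℕ} (hr : 0 < r) (hn : 2 * r + r * q < n)
    (h : r * n ≤ q * l ^ 2 + 2 * l * r) : r < l := by
  by_contra! hl
  have : q * l ^ 2 ≤ q * r ^ 2 := by gcongr
  have : r * (2 * r + r * q) < r * n := by gcongr
  nlinarith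

theorem two_mul_add_one_le {n q r l : ℕ} (h : q * l ^ 2 + 2 * l * r < r * n) :
    2 * l + 1 ≤ n := by
  by_contra! hn
  have : r * n ≤ r * (2 * l) := by gcongr; omega
  nlinarith

theorem hard_case_two_general (m n q r l : ℕ)
    (hm : m = n * q + r) (hr1 : 0 < r) (hbig : 2 * r + r * q < n)
    (hmin : ∀ l' : ℕ, l' < l →
      ¬(r * n ≤ q * l' ^ 2 + 2 * l' * r ∨ r * n ≤ q * l' ^ 2 + l' * (2 * r + q) + r))
    (h1 : r * n ≤ q * l ^ 2 + 2 * l * r) :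
    (∀ A : Fin n → Fin n → ℕ, IsDSM m n A → q * n + 2 * l ≤ tdet A) ∧
    (∃ A : Fin n → Fin n → ℕ, IsDSM m n A ∧ tdet A = q * n + 2 * l) := by
  subst hm
  have hrl : r < l := lt_of_mul_le_sq_add hr1 hbig h1
  obtain ⟨p, rfl⟩ : ∃ p, l = p + 1 := ⟨l - 1, by omega⟩
  have hprev := hmin p (lt_add_one p)
  push Not at hprev
  have hn := two_mul_add_one_le hprev.1
  have hlower : ∀ A, IsDSM (n * q + r) n A → q * n + 2 * (p + 1) ≤ tdet A :=
    fun A hA => add_two_mul_le_tdet hA hn hprev.2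
  obtain ⟨k, rfl⟩ : ∃ k, n = p + 1 + k := ⟨n - (p + 1), by omega⟩
  obtain ⟨A, hA, hupper⟩ := exists_isDSM_tdet_le (q := q) (k := k) (Nat.succ_pos p) hrl.le
    (by nlinarith [h1])
  exact ⟨hlower, A, hA, le_antisymm hupper (hlower A hA)⟩

/-- Hard case (2): m = nq + r, q ≥ 1, 0 < r < n, n > 2r + rq; l the smallest nonnegative
integer satisfying (1) q·l² + 2lr - rn ≥ 0 or (2) q·l² + l(2r+q) + r - rn ≥ 0.
If l satisfies both (1) and (2), then L(m,n) = qn + 2l. -/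
theorem hard_case_two (m n q r l : ℕ) (hq : 1 ≤ q)
    (hm : m = n * q + r) (hr1 : 0 < r) (hr2 : r < n) (hbig : 2 * r + r * q < n)
    (hl : r * n ≤ q * l ^ 2 + 2 * l * r ∨ r * n ≤ q * l ^ 2 + l * (2 * r + q) + r)
    (hmin : ∀ l' : ℕ, l' < l →
      ¬(r * n ≤ q * l' ^ 2 + 2 * l' * r ∨ r * n ≤ q * l' ^ 2 + l' * (2 * r + q) + r))
    (h1 : r * n ≤ q * l ^ 2 + 2 * l * r)
    (h2 : r * n ≤ q * l ^ 2 + l * (2 * r + q) + r) :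
    (∀ A : Fin n → Fin n → ℕ, IsDSM m n A → q * n + 2 * l ≤ tdet A) ∧
    (∃ A : Fin n → Fin n → ℕ, IsDSM m n A ∧ tdet A = q * n + 2 * l) :=
  hard_case_two_general m n q r l hm hr1 hbig hmin h1
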